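/- Let M be a deterministic, truthful, proportional two-agent mechanism, with M(uniform, uniform) = (X_1, X_2) where |X_1| = |X_2| = 1/2. Consider the input F³ where f_1 equals 0.5 on X_1 and 1 on X_2, and f_2 equals ε on X_1 and 1 on X_2, for sufficiently small ε > 0. Then the output (A_1, A_2) = M(F³) satisfies |A_1 ∩ X_1| = |A_1 ∩ X_2| = |A_2 ∩ X_1| = |A_2 ∩ X_2| = 1/4. -/

import Mathlib

open MeasureTheory Set
open scoped Classical

/-- The value of set `X` under value density function `f`. -/
noncomputable def val (f : ℝ → ℝ) (X : Set ℝ) : ℝ := ∫ t in X, f t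

/-- An admissible value density function: measurable and nonnegative. -/
def Adm (f : ℝ → ℝ) : Prop := Measurable f ∧ ∀ x, 0 ≤ f x

/-! Write `a, b, c, d` for `|A₁ ∩ X₁|, |A₁ ∩ X₂|, |A₂ ∩ X₁|, |A₂ ∩ X₂|`. A uniform agent 1
facing agent 2's report could misreport `f₁` and receive `A₁` instead of `X₁`, so truthfulness
gives `a + b ≤ 1/2`; proportionality of the two agents gives `a/2 + b ≥ 3/8` and
`εc + d ≥ (1 + ε)/4`; disjointness of the pieces gives `a + c ≤ 1/2` and `b + d ≤ 1/2`.
For `ε < 1/2` the only solution of this linear system is `a = b = c = d = 1/4`. -/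

open scoped ENNReal

lemma adm_ite {X : Set ℝ} (hX : MeasurableSet X) {r s : ℝ} (hr : 0 ≤ r) (hs : 0 ≤ s) :
    Adm fun x => if x ∈ X then r else s :=
  ⟨Measurable.ite hX measurable_const measurable_const, fun x => by
    dsimp only; split_ifs <;> assumption⟩

lemma adm_const {r : ℝ} (hr : 0 ≤ r) : Adm fun _ => r :=
  ⟨measurable_const, fun _ => hr⟩

lemma val_const_one (S : Set ℝ) : val (fun _ => 1) S = volume.real S := by
  simp [val]

lemma val_ite {X S : Set ℝ} (hX : MeasurableSet X) (hS : volume S ≠ ∞) (r s : ℝ) :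
    val (fun x => if x ∈ X then r else s) S
      = r * volume.real (S ∩ X) + s * volume.real (S \ X) := by
  have : IsFiniteMeasure (volume.restrict S) := isFiniteMeasure_restrict.mpr hS
  change ∫ t in S, X.piecewise (fun _ => r) (fun _ => s) t = _
  rw [integral_piecewise hX (integrable_const r).integrableOn (integrable_const s).integrableOn,
    setIntegral_const, setIntegral_const, measureReal_restrict_apply hX,
    measureReal_restrict_apply hX.compl, inter_comm, ← sdiff_eq_compl_inter]
  simp only [smul_eq_mul, mul_comm, inter_comm]

lemma measureReal_inter_add_inter_le {α : Type*} [MeasurableSpace α] {μ : Measure α}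
    {A B Y : Set α} (hAB : Disjoint A B) (hB : MeasurableSet B) (hY : MeasurableSet Y)
    (hY_fin : μ Y ≠ ∞) :
    μ.real (A ∩ Y) + μ.real (B ∩ Y) ≤ μ.real Y := by
  rw [← measureReal_union (hAB.mono inter_subset_left inter_subset_left) (hB.inter hY)
    (measure_inter_ne_top_of_right_ne_top hY_fin) (measure_inter_ne_top_of_right_ne_top hY_fin)]
  exact measureReal_mono (union_subset inter_subset_right inter_subset_right) hY_fin

lemma volume_ne_top_of_subset_Icc {S : Set ℝ} (hS : S ⊆ Icc 0 1) : volume S ≠ ∞ :=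
  measure_ne_top_of_subset hS measure_Icc_lt_top.ne

structure IsHalving (X₁ X₂ : Set ℝ) : Prop where
  measurableSet_fst : MeasurableSet X₁
  measurableSet_snd : MeasurableSet X₂
  fst_subset : X₁ ⊆ Icc 0 1
  snd_subset : X₂ ⊆ Icc 0 1
  disjoint : Disjoint X₁ X₂
  volume_fst : volume X₁ = 1/2
  volume_snd : volume X₂ = 1/2

namespace IsHalving

variable {X₁ X₂ S : Set ℝ}

lemma volume_real_fst (h : IsHalving X₁ X₂) : volume.real X₁ = 1/2 := by
  simp [measureReal_def, h.volume_fst]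

lemma volume_real_snd (h : IsHalving X₁ X₂) : volume.real X₂ = 1/2 := by
  simp [measureReal_def, h.volume_snd]

lemma snd_ae_eq (h : IsHalving X₁ X₂) : X₂ =ᵐ[volume] (Icc 0 1 \ X₁ : Set ℝ) := by
  have h_compl : volume (Icc 0 1 \ X₁) = 1/2 := by
    rw [measure_sdiff h.fst_subset h.measurableSet_fst.nullMeasurableSet
      (volume_ne_top_of_subset_Icc h.fst_subset), Real.volume_Icc, h.volume_fst]
    simp [ENNReal.one_sub_inv_two]
  refine ae_eq_of_subset_of_measure_ge
    (subset_sdiff.mpr ⟨h.snd_subset, h.disjoint.symm⟩) ?_ h.measurableSet_snd.nullMeasurableSet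
    (volume_ne_top_of_subset_Icc sdiff_subset)
  rw [h_compl, h.volume_snd]

lemma measureReal_inter_snd (h : IsHalving X₁ X₂) (hS : S ⊆ Icc 0 1) :
    volume.real (S ∩ X₂) = volume.real (S \ X₁) := by
  rw [measureReal_congr (ae_eq_set_inter (ae_eq_refl S) h.snd_ae_eq), ← inter_sdiff_assoc,
    inter_eq_left.mpr hS]

lemma measureReal_eq_add (h : IsHalving X₁ X₂) (hS : S ⊆ Icc 0 1) :
    volume.real S = volume.real (S ∩ X₁) + volume.real (S ∩ X₂) := by
  rw [h.measureReal_inter_snd hS, measureReal_inter_add_sdiff h.measurableSet_fst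
    (volume_ne_top_of_subset_Icc hS)]

lemma val_ite (h : IsHalving X₁ X₂) (hS : S ⊆ Icc 0 1) (r : ℝ) :
    val (fun x => if x ∈ X₁ then r else 1) S
      = r * volume.real (S ∩ X₁) + volume.real (S ∩ X₂) := by
  rw [_root_.val_ite h.measurableSet_fst (volume_ne_top_of_subset_Icc hS), one_mul,
    h.measureReal_inter_snd hS]

lemma val_ite_Icc (h : IsHalving X₁ X₂) (r : ℝ) :
    val (fun x => if x ∈ X₁ then r else 1) (Icc 0 1) = (r + 1) / 2 := by
  rw [h.val_ite subset_rfl, inter_eq_right.mpr h.fst_subset, inter_eq_right.mpr h.snd_subset,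
    h.volume_real_fst, h.volume_real_snd]
  ring

lemma inter_fst_add_inter_fst_le {A B : Set ℝ} (h : IsHalving X₁ X₂) (hAB : Disjoint A B)
    (hB : MeasurableSet B) : volume.real (A ∩ X₁) + volume.real (B ∩ X₁) ≤ 1/2 :=
  h.volume_real_fst ▸ measureReal_inter_add_inter_le hAB hB h.measurableSet_fst
    (volume_ne_top_of_subset_Icc h.fst_subset)

lemma inter_snd_add_inter_snd_le {A B : Set ℝ} (h : IsHalving X₁ X₂) (hAB : Disjoint A B)
    (hB : MeasurableSet B) : volume.real (A ∩ X₂) + volume.real (B ∩ X₂) ≤ 1/2 :=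
  h.volume_real_snd ▸ measureReal_inter_add_inter_le hAB hB h.measurableSet_snd
    (volume_ne_top_of_subset_Icc h.snd_subset)

end IsHalving

lemma eq_quarter_of_constraints {ε a b c d : ℝ} (hε : 0 < ε) (hε_half : ε < 1/2)
    (h_truth : a + b ≤ 1/2) (h_prop₁ : 3/8 ≤ a/2 + b) (h_prop₂ : (1 + ε)/4 ≤ ε * c + d)
    (h_X₁ : a + c ≤ 1/2) (h_X₂ : b + d ≤ 1/2) :
    a = 1/4 ∧ b = 1/4 ∧ c = 1/4 ∧ d = 1/4 := by
  have hb : b = 1/4 := by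
    -- `c ≤ 2b - 1/4` and `d ≤ 1/2 - b` turn agent 2's bound into one on `b` alone
    have hεc : ε * c ≤ ε * (2 * b - 1/4) := mul_le_mul_of_nonneg_left (by linarith) hε.le
    have : (1 - 2 * ε) * (b - 1/4) ≤ 0 := by linarith
    have : b ≤ 1/4 := by nlinarith
    linarith
  have ha : a = 1/4 := by linarith
  have hc : c = 1/4 := by
    have : 0 ≤ ε * (c - 1/4) := by linarith
    have : 1/4 ≤ c := by nlinarith
    linarith
  exact ⟨ha, hb, hc, by subst hc; linarith⟩

theorem output_on_instance_three
    (M : (ℝ → ℝ) → (ℝ → ℝ) → Set ℝ × Set ℝ)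
    (hSets : ∀ f₁ f₂, Adm f₁ → Adm f₂ →
      MeasurableSet (M f₁ f₂).1 ∧ MeasurableSet (M f₁ f₂).2 ∧
      (M f₁ f₂).1 ⊆ Set.Icc 0 1 ∧ (M f₁ f₂).2 ⊆ Set.Icc 0 1 ∧
      Disjoint (M f₁ f₂).1 (M f₁ f₂).2)
    (hProp : ∀ f₁ f₂, Adm f₁ → Adm f₂ →
      val f₁ (M f₁ f₂).1 ≥ (1/2) * val f₁ (Set.Icc 0 1) ∧
      val f₂ (M f₁ f₂).2 ≥ (1/2) * val f₂ (Set.Icc 0 1))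
    (hTruth1 : ∀ f₁ f₁' f₂, Adm f₁ → Adm f₁' → Adm f₂ →
      val f₁ (M f₁ f₂).1 ≥ val f₁ (M f₁' f₂).1)
    (X₁ X₂ : Set ℝ)
    (hUnif : M (fun _ => 1) (fun _ => 1) = (X₁, X₂))
    (hX₁ : volume X₁ = 1/2) (hX₂ : volume X₂ = 1/2) :
    ∃ ε₀ > (0:ℝ), ∀ ε : ℝ, 0 < ε → ε < ε₀ →
      -- the behavior forced on the instance of Proposition 2:
      M (fun _ => 1) (fun x => if x ∈ X₁ then ε else 1) = (X₁, X₂) →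
      -- conclusion about the instance F³:
      (volume ((M (fun x => if x ∈ X₁ then 0.5 else 1) (fun x => if x ∈ X₁ then ε else 1)).1 ∩ X₁) = 1/4 ∧
       volume ((M (fun x => if x ∈ X₁ then 0.5 else 1) (fun x => if x ∈ X₁ then ε else 1)).1 ∩ X₂) = 1/4 ∧
       volume ((M (fun x => if x ∈ X₁ then 0.5 else 1) (fun x => if x ∈ X₁ then ε else 1)).2 ∩ X₁) = 1/4 ∧
       volume ((M (fun x => if x ∈ X₁ then 0.5 else 1) (fun x => if x ∈ X₁ then ε else 1)).2 ∩ X₂) = 1/4) := by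
  refine ⟨1/2, by norm_num, fun ε hε hε_half hM₂ => ?_⟩
  have h_one : Adm fun _ : ℝ => (1 : ℝ) := adm_const zero_le_one
  have hH : IsHalving X₁ X₂ := by
    obtain ⟨hX₁m, hX₂m, hX₁I, hX₂I, hX⟩ := hUnif ▸ hSets _ _ h_one h_one
    exact ⟨hX₁m, hX₂m, hX₁I, hX₂I, hX, hX₁, hX₂⟩
  set f₁ : ℝ → ℝ := fun x => if x ∈ X₁ then 0.5 else 1
  set f₂ : ℝ → ℝ := fun x => if x ∈ X₁ then ε else 1
  have hf₁ : Adm f₁ := adm_ite hH.measurableSet_fst (by norm_num) zero_le_one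
  have hf₂ : Adm f₂ := adm_ite hH.measurableSet_fst hε.le zero_le_one
  obtain ⟨-, hA₂m, hA₁I, hA₂I, hA⟩ := hSets f₁ f₂ hf₁ hf₂
  have h_truth := hTruth1 _ f₁ f₂ h_one hf₁ hf₂
  rw [hM₂, val_const_one, val_const_one, hH.measureReal_eq_add hA₁I, hH.volume_real_fst]
    at h_truth
  obtain ⟨h_prop₁, h_prop₂⟩ := hProp f₁ f₂ hf₁ hf₂
  rw [hH.val_ite hA₁I, hH.val_ite_Icc] at h_prop₁
  rw [hH.val_ite hA₂I, hH.val_ite_Icc] at h_prop₂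
  obtain ⟨ha, hb, hc, hd⟩ := eq_quarter_of_constraints hε hε_half h_truth (by linarith)
    (by linarith) (hH.inter_fst_add_inter_fst_le hA hA₂m) (hH.inter_snd_add_inter_snd_le hA hA₂m)
  have h_quarter : ∀ S ⊆ Icc (0 : ℝ) 1, volume.real S = 1/4 → volume S = 1/4 := by
    intro S hS h
    rw [← ofReal_measureReal (volume_ne_top_of_subset_Icc hS), h, ENNReal.ofReal_div_of_pos]
    <;> norm_num
  exact ⟨h_quarter _ (inter_subset_left.trans hA₁I) ha,
    h_quarter _ (inter_subset_left.trans hA₁I) hb,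
    h_quarter _ (inter_subset_left.trans hA₂I) hc,
    h_quarter _ (inter_subset_left.trans hA₂I) hd⟩
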